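/- arXiv:1105.0201 — 2 statements merged into one kernel-verified Lean document; each statement's English description precedes it below -/
import Mathlib

section
/- Let V be an n-dimensional real vector space and g a symmetric bilinear form on V, and let (e_a)_{a=1}^n be a g-orthogonal basis of V (g(e_a,e_b) = 0 for a ≠ b). Then the family (♭e_a) indexed by those a with g(e_a,e_a) ≠ 0 is a basis of Im ♭, and for such indices a, b one has g•(♭e_a, ♭e_b) = g(e_a, e_b). In particular, if among the diagonal values g(e_a,e_a) exactly r are zero, s are negative and t are positive, then g• is diagonalized by this basis of Im ♭ with exactly s negative and t positive diagonal entries (signature (0,s,t)). -/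
/-!
A basis vector `e a` with `g (e a) (e a) = 0` is orthogonal to every basis vector, so `♭ (e a) = 0`;
hence the remaining `♭ (e a)` still span `Im ♭`. They are independent because evaluating a
relation `∑ c a • ♭ (e a) = 0` at `e b` leaves only `c b * g (e b) (e b)`. By symmetry of `g`,
`g•` does not depend on the chosen representatives, so `g• (♭ (e a)) (♭ (e b)) = g (e a) (e b)`,
and the signature count of `g•` is that of `g` with the zero diagonal entries discarded.
-/

/-- The radical-annihilator inner product `g•` on `Im ♭ = range g`:
`g•(♭u, ♭v) := g(u,v)`, computed via chosen representatives. -/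
noncomputable def radAnnInner {V : Type*} [AddCommGroup V] [Module ℝ V]
    (g : V →ₗ[ℝ] V →ₗ[ℝ] ℝ) (ω τ : LinearMap.range g) : ℝ :=
  g (LinearMap.mem_range.mp ω.2).choose (LinearMap.mem_range.mp τ.2).choose

theorem radAnnInner_mk_apply {V : Type*} [AddCommGroup V] [Module ℝ V]
    {g : V →ₗ[ℝ] V →ₗ[ℝ] ℝ} (hsymm : ∀ u v : V, g u v = g v u) (u v : V) :
    radAnnInner g ⟨g u, g.mem_range_self u⟩ ⟨g v, g.mem_range_self v⟩ = g u v := by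
  set x := (LinearMap.mem_range.mp (g.mem_range_self u)).choose
  set y := (LinearMap.mem_range.mp (g.mem_range_self v)).choose
  have hx : g x = g u := (LinearMap.mem_range.mp (g.mem_range_self u)).choose_spec
  have hy : g y = g v := (LinearMap.mem_range.mp (g.mem_range_self v)).choose_spec
  change g x y = g u v
  rw [hx, hsymm u y, hy]
  exact hsymm v u

namespace LinearMap

theorem span_range_rangeRestrict_comp_basis {R M N ι : Type*} [Semiring R] [AddCommMonoid M]
    [AddCommMonoid N] [Module R M] [Module R N] (f : M →ₗ[R] N) (e : Module.Basis ι R M) :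
    Submodule.span R (Set.range (f.rangeRestrict ∘ e)) = ⊤ := by
  rw [Set.range_comp, Submodule.span_image, e.span_eq, Submodule.map_top, range_rangeRestrict]

theorem apply_eq_zero_of_isOrthoᵢ {R M ι : Type*} [CommSemiring R] [AddCommMonoid M]
    [Module R M] {g : M →ₗ[R] M →ₗ[R] R} (e : Module.Basis ι R M) (he : g.IsOrthoᵢ e) {a : ι}
    (ha : g (e a) (e a) = 0) : g (e a) = 0 :=
  e.ext fun b => by
    rcases eq_or_ne a b with rfl | hab
    · simpa using ha
    · simpa using he hab

theorem linearIndependent_apply_of_isOrthoᵢ {K V ι : Type*} [Field K] [AddCommGroup V]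
    [Module K V] {g : V →ₗ[K] V →ₗ[K] K} {v : ι → V} (hv : g.IsOrthoᵢ v)
    (hdiag : ∀ i, g (v i) (v i) ≠ 0) : LinearIndependent K (fun i => g (v i)) := by
  rw [linearIndependent_iff']
  intro s w hs i hi
  have hsum : ∑ j ∈ s, w j * g (v j) (v i) = w i * g (v i) (v i) :=
    Finset.sum_eq_single_of_mem i hi fun j _ hji => by rw [hv hji, mul_zero]
  have hzero : ∑ j ∈ s, w j * g (v j) (v i) = 0 := by
    simpa using congrArg (· (v i)) hs
  exact (mul_eq_zero.mp (hsum ▸ hzero)).resolve_right (hdiag i)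

end LinearMap

theorem Submodule.span_range_subtype_eq {R M ι : Type*} [Semiring R] [AddCommMonoid M]
    [Module R M] {p : ι → Prop} {f : ι → M} (hf : ∀ i, ¬p i → f i = 0) :
    span R (Set.range fun i : Subtype p => f i) = span R (Set.range f) := by
  refine le_antisymm (span_mono (Set.range_comp_subset_range _ f)) (span_le.mpr ?_)
  rintro _ ⟨i, rfl⟩
  by_cases hi : p i
  · exact subset_span ⟨⟨i, hi⟩, rfl⟩
  · simp [hf i hi]

theorem Finset.card_filter_subtype_univ {α : Type*} [Fintype α] {p q : α → Prop}
    [DecidablePred p] [DecidablePred q] (h : ∀ a, q a → p a) :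
    (univ.filter fun a : Subtype p => q a).card = (univ.filter q).card := by
  rw [← Fintype.card_subtype, ← Fintype.card_subtype]
  exact Fintype.card_congr (Equiv.subtypeSubtypeEquivSubtype (h _))

open scoped Classical in
theorem radAnnInner_basis_signature_general {V : Type*} [AddCommGroup V] [Module ℝ V]
    (g : V →ₗ[ℝ] V →ₗ[ℝ] ℝ) (hsymm : ∀ u v : V, g u v = g v u)
    {n : ℕ} (e : Module.Basis (Fin n) ℝ V)
    (hortho : ∀ a b : Fin n, a ≠ b → g (e a) (e b) = 0)
    (s t : ℕ)
    (hs : s = (Finset.univ.filter (fun a : Fin n => g (e a) (e a) < 0)).card)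
    (ht : t = (Finset.univ.filter (fun a : Fin n => 0 < g (e a) (e a))).card) :
    LinearIndependent ℝ (fun a : {a : Fin n // g (e a) (e a) ≠ 0} =>
      (⟨g (e a.1), LinearMap.mem_range_self g (e a.1)⟩ : LinearMap.range g)) ∧
    Submodule.span ℝ (Set.range (fun a : {a : Fin n // g (e a) (e a) ≠ 0} =>
      (⟨g (e a.1), LinearMap.mem_range_self g (e a.1)⟩ : LinearMap.range g))) = ⊤ ∧
    (∀ a b : {a : Fin n // g (e a) (e a) ≠ 0},
      radAnnInner g ⟨g (e a.1), LinearMap.mem_range_self g (e a.1)⟩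
        ⟨g (e b.1), LinearMap.mem_range_self g (e b.1)⟩ = g (e a.1) (e b.1)) ∧
    (∀ a b : {a : Fin n // g (e a) (e a) ≠ 0}, a ≠ b →
      radAnnInner g ⟨g (e a.1), LinearMap.mem_range_self g (e a.1)⟩
        ⟨g (e b.1), LinearMap.mem_range_self g (e b.1)⟩ = 0) ∧
    (Finset.univ.filter (fun a : {a : Fin n // g (e a) (e a) ≠ 0} =>
      radAnnInner g ⟨g (e a.1), LinearMap.mem_range_self g (e a.1)⟩
        ⟨g (e a.1), LinearMap.mem_range_self g (e a.1)⟩ < 0)).card = s ∧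
    (Finset.univ.filter (fun a : {a : Fin n // g (e a) (e a) ≠ 0} =>
      0 < radAnnInner g ⟨g (e a.1), LinearMap.mem_range_self g (e a.1)⟩
        ⟨g (e a.1), LinearMap.mem_range_self g (e a.1)⟩)).card = t := by
  have hortho_ne : g.IsOrthoᵢ fun a : {a : Fin n // g (e a) (e a) ≠ 0} => e a :=
    fun a b hab => hortho a b (Subtype.val_injective.ne hab)
  refine ⟨?_, ?_, fun a b => radAnnInner_mk_apply hsymm _ _,
    fun a b hab => (radAnnInner_mk_apply hsymm _ _).trans (hortho_ne hab), ?_, ?_⟩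
  · exact .of_comp (LinearMap.range g).subtype
      (LinearMap.linearIndependent_apply_of_isOrthoᵢ hortho_ne fun a => a.2)
  · exact (Submodule.span_range_subtype_eq (f := g.rangeRestrict ∘ e) fun a ha =>
      Subtype.ext (LinearMap.apply_eq_zero_of_isOrthoᵢ e hortho (not_not.mp ha))).trans
      (g.span_range_rangeRestrict_comp_basis e)
  · simp only [radAnnInner_mk_apply hsymm]
    exact hs ▸ Finset.card_filter_subtype_univ fun _ => ne_of_lt
  · simp only [radAnnInner_mk_apply hsymm]
    exact ht ▸ Finset.card_filter_subtype_univ fun _ => ne_of_gt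

open scoped Classical in
/-- given a `g`-orthogonal basis `(e_a)` of `V`, the family `(♭e_a)` over
the indices `a` with `g(e_a,e_a) ≠ 0` is a basis of `Im ♭` (linearly independent and
spanning), on which `g•(♭e_a, ♭e_b) = g(e_a, e_b)`; thus this basis diagonalizes `g•`,
and if among the diagonal values `g(e_a,e_a)` exactly `r` are zero, `s` are negative and
`t` are positive, then `g•` has exactly `s` negative and `t` positive diagonal entries
(signature `(0,s,t)`). -/
theorem radAnnInner_basis_signature {V : Type*} [AddCommGroup V] [Module ℝ V]
    [FiniteDimensional ℝ V]
    (g : V →ₗ[ℝ] V →ₗ[ℝ] ℝ) (hsymm : ∀ u v : V, g u v = g v u)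
    {n : ℕ} (e : Module.Basis (Fin n) ℝ V)
    (hortho : ∀ a b : Fin n, a ≠ b → g (e a) (e b) = 0)
    (r s t : ℕ)
    (hr : r = (Finset.univ.filter (fun a : Fin n => g (e a) (e a) = 0)).card)
    (hs : s = (Finset.univ.filter (fun a : Fin n => g (e a) (e a) < 0)).card)
    (ht : t = (Finset.univ.filter (fun a : Fin n => 0 < g (e a) (e a))).card) :
    LinearIndependent ℝ (fun a : {a : Fin n // g (e a) (e a) ≠ 0} =>
      (⟨g (e a.1), LinearMap.mem_range_self g (e a.1)⟩ : LinearMap.range g)) ∧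
    Submodule.span ℝ (Set.range (fun a : {a : Fin n // g (e a) (e a) ≠ 0} =>
      (⟨g (e a.1), LinearMap.mem_range_self g (e a.1)⟩ : LinearMap.range g))) = ⊤ ∧
    (∀ a b : {a : Fin n // g (e a) (e a) ≠ 0},
      radAnnInner g ⟨g (e a.1), LinearMap.mem_range_self g (e a.1)⟩
        ⟨g (e b.1), LinearMap.mem_range_self g (e b.1)⟩ = g (e a.1) (e b.1)) ∧
    (∀ a b : {a : Fin n // g (e a) (e a) ≠ 0}, a ≠ b →
      radAnnInner g ⟨g (e a.1), LinearMap.mem_range_self g (e a.1)⟩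
        ⟨g (e b.1), LinearMap.mem_range_self g (e b.1)⟩ = 0) ∧
    (Finset.univ.filter (fun a : {a : Fin n // g (e a) (e a) ≠ 0} =>
      radAnnInner g ⟨g (e a.1), LinearMap.mem_range_self g (e a.1)⟩
        ⟨g (e a.1), LinearMap.mem_range_self g (e a.1)⟩ < 0)).card = s ∧
    (Finset.univ.filter (fun a : {a : Fin n // g (e a) (e a) ≠ 0} =>
      0 < radAnnInner g ⟨g (e a.1), LinearMap.mem_range_self g (e a.1)⟩
        ⟨g (e a.1), LinearMap.mem_range_self g (e a.1)⟩)).card = t :=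
  radAnnInner_basis_signature_general g hsymm e hortho s t hs ht
end

section
/- Let V be an n-dimensional real vector space, g a symmetric bilinear form on V, and (E_a)_{a=1}^n a g-orthogonal basis of V (g(E_a,E_b) = 0 for a ≠ b). Then for any ω₁, ω₂ ∈ Im ♭, the radical-annihilator inner product is computed by g•(ω₁, ω₂) = Σ_{a : g(E_a,E_a) ≠ 0} ω₁(E_a)·ω₂(E_a)/g(E_a,E_a); in particular the right-hand side is independent of the chosen g-orthogonal basis. -/
namespace LinearMap.IsOrthoᵢ

variable {R M ι : Type*} [CommSemiring R] [AddCommMonoid M] [Module R M]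
  {B : M →ₗ[R] M →ₗ[R] R} {b : Module.Basis ι R M}

theorem apply_basis_right (h : B.IsOrthoᵢ b) (x : M) (i : ι) :
    B x (b i) = b.repr x i * B (b i) (b i) := by
  conv_lhs => rw [← b.linearCombination_repr x]
  rw [Finsupp.linearCombination_apply, map_finsuppSum, LinearMap.finsupp_sum_apply]
  exact (Finsupp.sum_eq_single i (fun j _ hji => by simp [h hji]) (by simp)).trans (by simp)

theorem apply_eq_sum_repr_mul_repr [Fintype ι] (h : B.IsOrthoᵢ b) (x y : M) :
    B x y = ∑ i, b.repr x i * b.repr y i * B (b i) (b i) := by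
  conv_lhs => rw [← b.sum_repr y]
  simp only [map_sum, map_smul, smul_eq_mul]
  exact Finset.sum_congr rfl fun i _ => by rw [h.apply_basis_right x i]; ring

end LinearMap.IsOrthoᵢ

open scoped Classical in
theorem radAnnInner_eq_sum_orthogonal_basis_general {V : Type*} [AddCommGroup V] [Module ℝ V]
    (g : V →ₗ[ℝ] V →ₗ[ℝ] ℝ)
    {n : ℕ} (E : Module.Basis (Fin n) ℝ V)
    (hortho : ∀ a b : Fin n, a ≠ b → g (E a) (E b) = 0)
    (ω₁ ω₂ : LinearMap.range g) :
    radAnnInner g ω₁ ω₂ =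
      ∑ a ∈ Finset.univ.filter (fun a : Fin n => g (E a) (E a) ≠ 0),
        (ω₁ : V →ₗ[ℝ] ℝ) (E a) * (ω₂ : V →ₗ[ℝ] ℝ) (E a) / g (E a) (E a) := by
  have hE : g.IsOrthoᵢ E := fun a b hab => hortho a b hab
  set u := (LinearMap.mem_range.mp ω₁.2).choose
  set v := (LinearMap.mem_range.mp ω₂.2).choose
  have hu : g u = ω₁ := (LinearMap.mem_range.mp ω₁.2).choose_spec
  have hv : g v = ω₂ := (LinearMap.mem_range.mp ω₂.2).choose_spec
  calc radAnnInner g ω₁ ω₂ = g u v := rfl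
    _ = ∑ a, E.repr u a * E.repr v a * g (E a) (E a) := hE.apply_eq_sum_repr_mul_repr u v
    _ = ∑ a ∈ Finset.univ.filter (fun a => g (E a) (E a) ≠ 0),
          E.repr u a * E.repr v a * g (E a) (E a) :=
      (Finset.sum_filter_of_ne fun a _ ha => right_ne_zero_of_mul ha).symm
    _ = _ := by
      refine Finset.sum_congr rfl fun a ha => ?_
      rw [← hu, ← hv, hE.apply_basis_right u a, hE.apply_basis_right v a]
      field_simp [(Finset.mem_filter.mp ha).2]

open scoped Classical in
/-- in a `g`-orthogonal basis `(E_a)` of `V`, for any `ω₁, ω₂ ∈ Im ♭`,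
`g•(ω₁, ω₂) = Σ_{a : g(E_a,E_a) ≠ 0} ω₁(E_a)·ω₂(E_a)/g(E_a,E_a)`;
in particular the right-hand side does not depend on the chosen orthogonal basis. -/
theorem radAnnInner_eq_sum_orthogonal_basis {V : Type*} [AddCommGroup V] [Module ℝ V]
    [FiniteDimensional ℝ V]
    (g : V →ₗ[ℝ] V →ₗ[ℝ] ℝ) (hsymm : ∀ u v : V, g u v = g v u)
    {n : ℕ} (E : Module.Basis (Fin n) ℝ V)
    (hortho : ∀ a b : Fin n, a ≠ b → g (E a) (E b) = 0)
    (ω₁ ω₂ : LinearMap.range g) :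
    radAnnInner g ω₁ ω₂ =
      ∑ a ∈ Finset.univ.filter (fun a : Fin n => g (E a) (E a) ≠ 0),
        (ω₁ : V →ₗ[ℝ] ℝ) (E a) * (ω₂ : V →ₗ[ℝ] ℝ) (E a) / g (E a) (E a) :=
  radAnnInner_eq_sum_orthogonal_basis_general g E hortho ω₁ ω₂
end
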